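/- Let ω be a modulus of continuity, let δ_k > 0 satisfy ∑_{k=1}^∞ δ_k < 2π/6, and let u be the associated sum-of-triangles function. Then for every positive integer n the function u_n(t) = max{u(t), 1/n} has bounded variation on [0,2π]. -/

import Mathlib

open Real Filter

noncomputable section

/-- A modulus of continuity: a nondecreasing continuous function `ω : [0,∞) → [0,∞)`
with `ω 0 = 0` and `ω (x+y) ≤ ω x + ω y`. -/
def IsModulusOfContinuity (ω : ℝ → ℝ) : Prop :=
  ContinuousOn ω (Set.Ici 0) ∧ MonotoneOn ω (Set.Ici 0) ∧ ω 0 = 0 ∧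
    (∀ x : ℝ, 0 ≤ x → 0 ≤ ω x) ∧
    ∀ x y : ℝ, 0 ≤ x → 0 ≤ y → ω (x + y) ≤ ω x + ω y

/-- The triangle function `Δ_{[a,b]}`: zero outside `[a, b]`, equal to `1` at the center
`(a+b)/2`, and linear on each half of `[a, b]`. -/
def triangle (a b t : ℝ) : ℝ := max 0 (1 - |t - (a + b) / 2| / ((b - a) / 2))

/-! The truncation at height `c > 0` only sees the finitely many triangles taller than `c`:
every other triangle stays below `c`, and since the supports are disjoint, at each point at
most one triangle is nonzero. So `max u c` agrees with the truncation of a finite sum of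
Lipschitz functions, which is Lipschitz and hence of bounded variation. -/

open Function Set

theorem LipschitzWith.finset_sum {ι α E : Type*} [PseudoEMetricSpace α]
    [SeminormedAddCommGroup E] {s : Finset ι} {f : ι → α → E} {K : ι → NNReal}
    (hf : ∀ i ∈ s, LipschitzWith (K i) (f i)) :
    LipschitzWith (∑ i ∈ s, K i) fun x => ∑ i ∈ s, f i x := by
  classical
  induction s using Finset.induction_on with
  | empty => simpa using LipschitzWith.const (0 : E)
  | insert i s hi ih =>
    simp only [Finset.sum_insert hi]
    exact (hf i (s.mem_insert_self i)).add (ih fun j hj => hf j (Finset.mem_insert_of_mem hj))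

theorem LipschitzWith.boundedVariationOn_Icc {f : ℝ → ℝ} {K : NNReal} (hf : LipschitzWith K f)
    {a b : ℝ} (hab : a ≤ b) : BoundedVariationOn f (Icc a b) := by
  simpa using hf.lipschitzOnWith.locallyBoundedVariationOn a b (left_mem_Icc.2 hab)
    (right_mem_Icc.2 hab)

theorem IsModulusOfContinuity.finite_setOf_lt {ι : Type*} {ω : ℝ → ℝ}
    (hω : IsModulusOfContinuity ω) {δ : ι → ℝ} (hδ : ∀ i, 0 ≤ δ i)
    (hδ0 : Tendsto δ cofinite (nhds 0)) {c : ℝ} (hc : 0 < c) :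
    {i | c < ω (δ i)}.Finite := by
  have hω0 : Tendsto ω (nhdsWithin 0 (Ici 0)) (nhds 0) := by
    simpa [hω.2.2.1] using (hω.1 0 self_mem_Ici).tendsto
  have hωδ : Tendsto (fun i => ω (δ i)) cofinite (nhds 0) :=
    hω0.comp (tendsto_nhdsWithin_iff.2 ⟨hδ0, Eventually.of_forall hδ⟩)
  simpa using eventually_cofinite.1 (hωδ.eventually_le_const hc)

theorem pairwise_disjoint_Ioo_of_le_succ {a b : ℕ → ℝ} (hab : ∀ k, a k ≤ b k)
    (hba : ∀ k, b k ≤ a (k + 1)) : Pairwise (Disjoint on fun k => Ioo (a k) (b k)) := by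
  have ha : Monotone a := monotone_nat_of_le_succ fun k => (hab k).trans (hba k)
  refine (pairwise_disjoint_on _).2 fun j k hjk => disjoint_left.2 fun t hj hk => ?_
  linarith [hj.2, hk.1, hba j, ha (Nat.succ_le_of_lt hjk)]

theorem max_tsum_eq_max_sum_of_pairwise_disjoint {ι : Type*} {f : ι → ℝ → ℝ}
    (hf : Pairwise (Disjoint on fun i => support (f i))) {c : ℝ} (hc : 0 ≤ c) {s : Finset ι}
    (hs : ∀ i ∉ s, ∀ t, f i t ≤ c) (t : ℝ) :
    max (∑' i, f i t) c = max (∑ i ∈ s, f i t) c := by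
  by_cases hzero : ∀ i, f i t = 0
  · simp [hzero]
  push Not at hzero
  obtain ⟨k, hk⟩ := hzero
  have honly : ∀ j ≠ k, f j t = 0 := fun j hjk =>
    notMem_support.1 fun hj => disjoint_left.1 (hf hjk) hj hk
  rw [tsum_eq_single k honly]
  by_cases hks : k ∈ s
  · rw [Finset.sum_eq_single_of_mem k hks fun j _ hjk => honly j hjk]
  · rw [Finset.sum_eq_zero fun j hj => honly j (ne_of_mem_of_not_mem hj hks),
      max_eq_right (hs k hks t), max_eq_right hc]

theorem triangle_le_one {a b : ℝ} (hab : a ≤ b) (t : ℝ) : triangle a b t ≤ 1 := by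
  have : 0 ≤ |t - (a + b) / 2| / ((b - a) / 2) := div_nonneg (abs_nonneg _) (by linarith)
  exact max_le zero_le_one (by linarith)

theorem support_triangle_subset {a b : ℝ} (hab : a < b) : support (triangle a b) ⊆ Ioo a b := by
  intro t ht
  have hpos : 0 < 1 - |t - (a + b) / 2| / ((b - a) / 2) := by
    by_contra! h
    exact ht (max_eq_left h)
  have hlt : |t - (a + b) / 2| < (b - a) / 2 := (div_lt_one (by linarith)).1 (by linarith)
  rw [abs_lt] at hlt
  constructor <;> linarith

theorem lipschitzWith_triangle (a b : ℝ) : LipschitzWith ‖((b - a) / 2)⁻¹‖₊ (triangle a b) := by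
  have h : triangle a b = fun t => max 0 (1 - ((b - a) / 2)⁻¹ • dist t ((a + b) / 2)) := by
    funext t
    rw [triangle, Real.dist_eq, smul_eq_mul, div_eq_inv_mul]
  rw [h]
  exact (((LipschitzWith.const 1).sub ((lipschitzWith_smul _).comp
    (LipschitzWith.dist_left _))).const_max 0).weaken (by simp)

theorem truncated_sum_of_triangles_boundedVariation_general (ω : ℝ → ℝ)
    (hω : IsModulusOfContinuity ω)
    (δ : ℕ → ℝ) (hδ : ∀ k, 0 < δ k) (hδsum : Summable δ)
    (a : ℕ → ℝ) (ha : ∀ k, a k + 6 * δ k < a (k + 1))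
    (u : ℝ → ℝ)
    (hu : ∀ t, u t = ∑' k, ω (δ k) * triangle (a k) (a k + 6 * δ k) t)
    (n : ℕ) (hn : 0 < n) :
    BoundedVariationOn (fun t => max (u t) (1 / (n : ℝ))) (Set.Icc 0 (2 * Real.pi)) := by
  set T : ℕ → ℝ → ℝ := fun k t => ω (δ k) * triangle (a k) (a k + 6 * δ k) t
  have hlt : ∀ k, a k < a k + 6 * δ k := fun k => by linarith [hδ k]
  have hdisj : Pairwise (Disjoint on fun k => support (T k)) :=
    (pairwise_disjoint_Ioo_of_le_succ (fun k => (hlt k).le) fun k => (ha k).le).mono fun j k h =>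
      h.mono ((support_mul_subset_right _ _).trans (support_triangle_subset (hlt j)))
        ((support_mul_subset_right _ _).trans (support_triangle_subset (hlt k)))
  have hc : (0 : ℝ) < 1 / n := by positivity
  set F := (hω.finite_setOf_lt (fun k => (hδ k).le) hδsum.tendsto_cofinite_zero hc).toFinset
  have hsmall : ∀ k ∉ F, ∀ t, T k t ≤ 1 / n := fun k hk t => by
    have hωk : ω (δ k) ≤ 1 / n := by simpa [F] using hk
    calc T k t ≤ ω (δ k) * 1 :=
          mul_le_mul_of_nonneg_left (triangle_le_one (hlt k).le t) (hω.2.2.2.1 _ (hδ k).le)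
      _ ≤ 1 / n := by rwa [mul_one]
  have heq : (fun t => max (u t) (1 / (n : ℝ))) = fun t => max (∑ k ∈ F, T k t) (1 / n) :=
    funext fun t => (hu t).symm ▸ max_tsum_eq_max_sum_of_pairwise_disjoint hdisj hc.le hsmall t
  have hlip : ∀ k, LipschitzWith (‖ω (δ k)‖₊ * ‖((a k + 6 * δ k - a k) / 2)⁻¹‖₊) (T k) :=
    fun k => (lipschitzWith_smul (ω (δ k))).comp (lipschitzWith_triangle _ _)
  rw [heq]
  exact ((LipschitzWith.finset_sum fun k _ => hlip k).max_const _).boundedVariationOn_Icc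
    (by positivity)

/-- Let `ω` be a modulus of continuity, `δ_k > 0` with `∑ δ_k < 2π/6`, and let `u` be the
associated sum-of-triangles function over disjoint intervals `I_k = [a_k, a_k + 6δ_k]` inside
`(0, 2π)`. Then for every positive integer `n` the function `u_n(t) = max{u(t), 1/n}` has
bounded variation on `[0, 2π]`. -/
theorem truncated_sum_of_triangles_boundedVariation (ω : ℝ → ℝ)
    (hω : IsModulusOfContinuity ω)
    (δ : ℕ → ℝ) (hδ : ∀ k, 0 < δ k) (hδsum : Summable δ)
    (hδlt : (∑' k, δ k) < 2 * Real.pi / 6)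
    (a : ℕ → ℝ) (ha0 : ∀ k, 0 < a k) (ha : ∀ k, a k + 6 * δ k < a (k + 1))
    (ha2π : ∀ k, a k + 6 * δ k < 2 * Real.pi)
    (u : ℝ → ℝ)
    (hu : ∀ t, u t = ∑' k, ω (δ k) * triangle (a k) (a k + 6 * δ k) t)
    (n : ℕ) (hn : 0 < n) :
    BoundedVariationOn (fun t => max (u t) (1 / (n : ℝ))) (Set.Icc 0 (2 * Real.pi)) :=
  truncated_sum_of_triangles_boundedVariation_general ω hω δ hδ hδsum a ha u hu n hn
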